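/- arXiv:2110.13147 — 2 statements merged into one kernel-verified Lean document; each statement's English description precedes it below -/
import Mathlib

section
/- Let α ∈ (0,1], T > 0, and let f : [0,T] × ℝ → ℝ be continuous and satisfy the Lipschitz condition. Then for every x₀ ∈ ℝ there exists exactly one continuous function x : [0,T] → ℝ satisfying x(t) = x₀ + (1/Γ(α)) ∫₀ᵗ (t−s)^{α−1} f(s, x(s)) ds for all t ∈ [0,T]. -/
/-!
Write `I^α g (t) = Γ(α)⁻¹ ∫₀ᵗ (t - s)^(α-1) g(s) ds` and let `K` bound the continuous function `L`
on `[0,T]`. The Gamma integral `∫₀^∞ v^(α-1) e^(-λv) dv = Γ(α) λ^(-α)` gives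
`I^α (e^(λ·)) (t) ≤ λ^(-α) e^(λt)`, so the Picard operator `x ↦ x₀ + I^α f(·, x)` contracts the
Bielecki norm `sup e^(-λt) |x t|` by the factor `K λ^(-α)`, which is `< 1` for large `λ`. Banach's
fixed point theorem gives the unique solution.
-/

open Set intervalIntegral

/-- A continuous function `x` on `[0,T]` solves the Caputo fractional initial value
problem `^C D^α_{0+} x(t) = f(t,x(t))`, `x(0) = x₀`, in the equivalent Volterra
integral formulation. -/
def IsCaputoSolution (α T : ℝ) (f : ℝ → ℝ → ℝ) (x₀ : ℝ) (x : ℝ → ℝ) : Prop :=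
  ContinuousOn x (Set.Icc 0 T) ∧
    ∀ t ∈ Set.Icc 0 T,
      x t = x₀ + (1 / Real.Gamma α) * ∫ s in (0:ℝ)..t, (t - s) ^ (α - 1) * f s (x s)

open MeasureTheory Real
open scoped NNReal

section Kernel

variable {α : ℝ}

lemma intervalIntegrable_sub_rpow (hα : 0 < α) (t : ℝ) :
    IntervalIntegrable (fun s => (t - s) ^ (α - 1)) volume 0 t := by
  simpa using ((intervalIntegrable_rpow' (by linarith : -1 < α - 1)).comp_sub_left t :
    IntervalIntegrable (fun s => (t - s) ^ (α - 1)) volume (t - t) (t - 0))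

lemma intervalIntegrable_sub_rpow_mul (hα : 0 < α) {g : ℝ → ℝ} {t : ℝ}
    (hg : ContinuousOn g (Icc 0 t)) (ht : 0 ≤ t) :
    IntervalIntegrable (fun s => (t - s) ^ (α - 1) * g s) volume 0 t :=
  (intervalIntegrable_sub_rpow hα t).mul_continuousOn (by rwa [uIcc_of_le ht])

/-- After the substitution `s = t u` the singular kernel no longer depends on `t`, so that
continuity in `t` follows by dominated convergence. -/
lemma integral_sub_rpow_mul_eq (hα : 0 < α) (g : ℝ → ℝ) {t : ℝ} (ht : 0 ≤ t) :
    ∫ s in (0:ℝ)..t, (t - s) ^ (α - 1) * g s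
      = t ^ α * ∫ u in (0:ℝ)..1, (1 - u) ^ (α - 1) * g (t * u) := by
  rcases ht.eq_or_lt with rfl | ht
  · simp [zero_rpow hα.ne']
  have hscale : ∀ u ∈ uIcc (0:ℝ) 1, t ^ α * ((1 - u) ^ (α - 1) * g (t * u))
      = t * ((t - t * u) ^ (α - 1) * g (t * u)) := fun u hu => by
    rw [uIcc_of_le zero_le_one] at hu
    rw [show t - t * u = t * (1 - u) by ring, mul_rpow ht.le (by linarith [hu.2]),
      mul_assoc (t ^ (α - 1)), ← mul_assoc t, ← rpow_one_add' ht.le (by linarith),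
      add_sub_cancel]
  rw [← intervalIntegral.integral_const_mul, integral_congr hscale,
    intervalIntegral.integral_const_mul, ← smul_eq_mul,
    smul_integral_comp_mul_left (fun s => (t - s) ^ (α - 1) * g s) t]
  simp

lemma continuousOn_integral_one_sub_rpow_mul (hα : 0 < α) {g : ℝ → ℝ} {T : ℝ}
    (hg : ContinuousOn g (Icc 0 T)) :
    ContinuousOn (fun t => ∫ u in (0:ℝ)..1, (1 - u) ^ (α - 1) * g (t * u)) (Icc 0 T) := by
  obtain ⟨M, hM⟩ := isCompact_Icc.exists_bound_of_continuousOn hg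
  have hmem : ∀ t ∈ Icc 0 T, ∀ u ∈ Ioc (0:ℝ) 1, t * u ∈ Icc 0 T := fun t ht u hu =>
    ⟨mul_nonneg ht.1 hu.1.le, by nlinarith [ht.1, ht.2, hu.1, hu.2]⟩
  have hkernel : Measurable fun u : ℝ => (1 - u) ^ (α - 1) := by fun_prop
  simp only [integral_of_le zero_le_one]
  refine continuousOn_of_dominated (bound := fun u => (1 - u) ^ (α - 1) * M) ?_ ?_ ?_ ?_
  · intro t ht
    exact hkernel.aestronglyMeasurable.mul <| ContinuousOn.aestronglyMeasurable
      (hg.comp (continuousOn_const.mul continuousOn_id) (hmem t ht)) measurableSet_Ioc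
  · intro t ht
    filter_upwards [ae_restrict_mem measurableSet_Ioc] with u hu
    rw [norm_mul, norm_of_nonneg (rpow_nonneg (by linarith [hu.2]) _)]
    exact mul_le_mul_of_nonneg_left (hM _ (hmem t ht u hu)) (rpow_nonneg (by linarith [hu.2]) _)
  · exact ((intervalIntegrable_sub_rpow hα 1).mul_const M).1
  · filter_upwards [ae_restrict_mem measurableSet_Ioc] with u hu
    exact continuousOn_const.mul (hg.comp (continuousOn_id.mul continuousOn_const) (hmem · · u hu))

lemma integral_sub_rpow_mul_exp_le (hα : 0 < α) {lam t : ℝ} (hlam : 0 < lam) (ht : 0 ≤ t) :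
    ∫ s in (0:ℝ)..t, (t - s) ^ (α - 1) * exp (lam * s)
      ≤ Gamma α * (1 / lam) ^ α * exp (lam * t) := by
  set F : ℝ → ℝ := fun v => v ^ (α - 1) * exp (-(lam * v))
  have hF : ∫ v in Ioi 0, F v = (1 / lam) ^ α * Gamma α :=
    integral_rpow_mul_exp_neg_mul_Ioi hα hlam
  have hFint : IntegrableOn F (Ioi 0) :=
    Integrable.of_integral_ne_zero (by rw [hF]; positivity)
  have hshift : ∫ s in (0:ℝ)..t, (t - s) ^ (α - 1) * exp (lam * s)
      = exp (lam * t) * ∫ v in (0:ℝ)..t, F v := by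
    rw [show ∫ v in (0:ℝ)..t, F v = ∫ s in (0:ℝ)..t, F (t - s) by
      simp [integral_comp_sub_left F t], ← intervalIntegral.integral_const_mul]
    refine integral_congr fun s _ => ?_
    simp only [F, mul_left_comm (exp _), ← exp_add]
    ring_nf
  have htail : ∫ v in (0:ℝ)..t, F v ≤ ∫ v in Ioi 0, F v := by
    rw [integral_of_le ht]
    refine setIntegral_mono_set hFint ?_ Ioc_subset_Ioi_self.eventuallyLE
    filter_upwards [ae_restrict_mem measurableSet_Ioi] with v hv
    exact mul_nonneg (rpow_nonneg hv.le _) (exp_nonneg _)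
  calc _ = exp (lam * t) * ∫ v in (0:ℝ)..t, F v := hshift
    _ ≤ exp (lam * t) * ∫ v in Ioi 0, F v := by gcongr
    _ = Gamma α * (1 / lam) ^ α * exp (lam * t) := by rw [hF]; ring

end Kernel

noncomputable def riemannLiouvilleIntegral (α : ℝ) (g : ℝ → ℝ) (t : ℝ) : ℝ :=
  1 / Gamma α * ∫ s in (0:ℝ)..t, (t - s) ^ (α - 1) * g s

section RiemannLiouville

variable {α : ℝ}

lemma continuousOn_riemannLiouvilleIntegral (hα : 0 < α) {g : ℝ → ℝ} {T : ℝ}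
    (hg : ContinuousOn g (Icc 0 T)) :
    ContinuousOn (riemannLiouvilleIntegral α g) (Icc 0 T) := by
  refine ContinuousOn.congr (f := fun t => 1 / Gamma α *
      (t ^ α * ∫ u in (0:ℝ)..1, (1 - u) ^ (α - 1) * g (t * u))) ?_ fun t ht => ?_
  · exact continuousOn_const.mul ((continuousOn_id.rpow_const fun _ _ => Or.inr hα.le).mul
      (continuousOn_integral_one_sub_rpow_mul hα hg))
  · rw [riemannLiouvilleIntegral, integral_sub_rpow_mul_eq hα g ht.1]

lemma abs_riemannLiouvilleIntegral_sub_le (hα : 0 < α) {lam t C : ℝ} (hlam : 0 < lam)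
    (ht : 0 ≤ t) {g₁ g₂ : ℝ → ℝ} (hg₁ : ContinuousOn g₁ (Icc 0 t))
    (hg₂ : ContinuousOn g₂ (Icc 0 t)) (hC : ∀ s ∈ Icc 0 t, |g₁ s - g₂ s| ≤ C * exp (lam * s)) :
    |riemannLiouvilleIntegral α g₁ t - riemannLiouvilleIntegral α g₂ t|
      ≤ C * (1 / lam) ^ α * exp (lam * t) := by
  have hC0 : 0 ≤ C :=
    (mul_nonneg_iff_of_pos_right (exp_pos _)).1 ((abs_nonneg _).trans (hC 0 ⟨le_rfl, ht⟩))
  have hΓ : 0 < Gamma α := Gamma_pos_of_pos hα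
  have hdiff : |(∫ s in (0:ℝ)..t, (t - s) ^ (α - 1) * g₁ s)
      - ∫ s in (0:ℝ)..t, (t - s) ^ (α - 1) * g₂ s|
      ≤ C * ∫ s in (0:ℝ)..t, (t - s) ^ (α - 1) * exp (lam * s) := by
    rw [← integral_sub (intervalIntegrable_sub_rpow_mul hα hg₁ ht)
      (intervalIntegrable_sub_rpow_mul hα hg₂ ht), ← intervalIntegral.integral_const_mul,
      ← norm_eq_abs]
    have hexp : IntervalIntegrable (fun s => (t - s) ^ (α - 1) * exp (lam * s)) volume 0 t :=
      intervalIntegrable_sub_rpow_mul hα (by fun_prop) ht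
    refine intervalIntegral.norm_integral_le_of_norm_le ht
      (Filter.Eventually.of_forall fun s hs => ?_) (hexp.const_mul C)
    have hkernel : 0 ≤ (t - s) ^ (α - 1) := rpow_nonneg (by linarith [hs.2]) _
    rw [← mul_sub, norm_mul, norm_of_nonneg hkernel, mul_left_comm]
    exact mul_le_mul_of_nonneg_left (hC s (Ioc_subset_Icc_self hs)) hkernel
  calc |riemannLiouvilleIntegral α g₁ t - riemannLiouvilleIntegral α g₂ t|
      = 1 / Gamma α * |(∫ s in (0:ℝ)..t, (t - s) ^ (α - 1) * g₁ s)
          - ∫ s in (0:ℝ)..t, (t - s) ^ (α - 1) * g₂ s| := by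
        rw [riemannLiouvilleIntegral, riemannLiouvilleIntegral, ← mul_sub, abs_mul,
          abs_of_pos (by positivity)]
    _ ≤ 1 / Gamma α * (C * (Gamma α * (1 / lam) ^ α * exp (lam * t))) := by
        gcongr
        exact hdiff.trans (mul_le_mul_of_nonneg_left (integral_sub_rpow_mul_exp_le hα hlam ht) hC0)
    _ = C * (1 / lam) ^ α * exp (lam * t) := by
        field_simp

end RiemannLiouville

lemma ContinuousOn.comp_id_prodMk {f : ℝ → ℝ → ℝ} {s : Set ℝ}
    (hf : ContinuousOn (fun p : ℝ × ℝ => f p.1 p.2) (s ×ˢ univ)) {x : ℝ → ℝ}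
    (hx : ContinuousOn x s) : ContinuousOn (fun t => f t (x t)) s :=
  hf.comp (continuousOn_id.prodMk hx) fun _ ht => ⟨ht, mem_univ _⟩

/-- Conjugating the Picard operator `x ↦ x₀ + I^α f(·, x)` by the weight `exp (λ t)` turns the
Bielecki norm `sup exp (-λ t) |x t|` into the sup norm of `C([0,T])`. -/
noncomputable def weightedPicard (α lam x₀ : ℝ) (f : ℝ → ℝ → ℝ) {T : ℝ} (hT : 0 ≤ T)
    (u : C(Icc (0:ℝ) T, ℝ)) (t : Icc (0:ℝ) T) : ℝ :=
  exp (-(lam * t)) *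
    (x₀ + riemannLiouvilleIntegral α (fun s => f s (exp (lam * s) * IccExtend hT u s)) t)

section WeightedPicard

variable {α T lam x₀ : ℝ} {f : ℝ → ℝ → ℝ} (hT : 0 ≤ T)

lemma continuous_weightedPicard (hα : 0 < α)
    (hf : ContinuousOn (fun p : ℝ × ℝ => f p.1 p.2) (Icc 0 T ×ˢ univ)) (u : C(Icc (0:ℝ) T, ℝ)) :
    Continuous (weightedPicard α lam x₀ f hT u) :=
  (by fun_prop : Continuous fun t : Icc (0:ℝ) T => exp (-(lam * t))).mul
    (continuous_const.add (continuousOn_riemannLiouvilleIntegral hα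
      (hf.comp_id_prodMk (by fun_prop))).domRestrict)

lemma abs_weightedPicard_sub_le (hα : 0 < α) (hlam : 0 < lam)
    (hf : ContinuousOn (fun p : ℝ × ℝ => f p.1 p.2) (Icc 0 T ×ˢ univ)) {K : ℝ≥0}
    (hK : ∀ t ∈ Icc 0 T, LipschitzWith K (f t)) (u v : C(Icc (0:ℝ) T, ℝ)) (t : Icc (0:ℝ) T) :
    |weightedPicard α lam x₀ f hT u t - weightedPicard α lam x₀ f hT v t|
      ≤ K * (1 / lam) ^ α * dist u v := by
  have hsub : Icc 0 (t : ℝ) ⊆ Icc 0 T := Icc_subset_Icc_right t.2.2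
  have hI := abs_riemannLiouvilleIntegral_sub_le hα hlam t.2.1 (C := K * dist u v)
    ((hf.comp_id_prodMk (x := fun s => exp (lam * s) * IccExtend hT u s) (by fun_prop)).mono hsub)
    ((hf.comp_id_prodMk (x := fun s => exp (lam * s) * IccExtend hT v s) (by fun_prop)).mono hsub)
    fun s hs => by
      have hsT := hsub hs
      calc |f s (exp (lam * s) * IccExtend hT u s) - f s (exp (lam * s) * IccExtend hT v s)|
          ≤ K * |exp (lam * s) * IccExtend hT u s - exp (lam * s) * IccExtend hT v s| := by
            simpa only [← dist_eq] using (hK s hsT).dist_le_mul _ _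
        _ = K * (exp (lam * s) * dist (u ⟨s, hsT⟩) (v ⟨s, hsT⟩)) := by
            rw [IccExtend_of_mem hT u hsT, IccExtend_of_mem hT v hsT, ← mul_sub, abs_mul,
              abs_of_pos (exp_pos _), dist_eq]
        _ ≤ K * (exp (lam * s) * dist u v) := by
            gcongr
            exact ContinuousMap.dist_apply_le_dist _
        _ = K * dist u v * exp (lam * s) := by ring
  rw [weightedPicard, weightedPicard, ← mul_sub, add_sub_add_left_eq_sub, abs_mul,
    abs_of_pos (exp_pos _)]
  calc exp (-(lam * t)) * |_|
      ≤ exp (-(lam * t)) * (K * dist u v * (1 / lam) ^ α * exp (lam * t)) := by gcongr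
    _ = K * (1 / lam) ^ α * dist u v := by
        rw [exp_neg]
        field_simp

lemma weightedPicard_eq_iff {u : C(Icc (0:ℝ) T, ℝ)} {x : ℝ → ℝ}
    (hx : ∀ t (ht : t ∈ Icc 0 T), x t = exp (lam * t) * u ⟨t, ht⟩) :
    (∀ t, weightedPicard α lam x₀ f hT u t = u t) ↔
      ∀ t ∈ Icc 0 T, x t = x₀ + riemannLiouvilleIntegral α (fun s => f s (x s)) t := by
  have hI : ∀ t ∈ Icc 0 T,
      riemannLiouvilleIntegral α (fun s => f s (exp (lam * s) * IccExtend hT u s)) t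
        = riemannLiouvilleIntegral α (fun s => f s (x s)) t := fun t ht => by
    refine congrArg _ (integral_congr fun s hs => ?_)
    rw [uIcc_of_le ht.1] at hs
    have hsT : s ∈ Icc 0 T := ⟨hs.1, hs.2.trans ht.2⟩
    simp only [IccExtend_of_mem hT u hsT, hx s hsT]
  refine Subtype.forall.trans (forall₂_congr fun t ht => ?_)
  rw [weightedPicard, hI t ht, hx t ht, eq_comm, ← mul_right_inj' (exp_pos (lam * t)).ne',
    ← mul_assoc, ← exp_add, add_neg_cancel, exp_zero, one_mul]

end WeightedPicard

theorem exists_isCaputoSolution_unique_of_lipschitzWith {α T : ℝ} (hα : 0 < α) (hT : 0 ≤ T)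
    {f : ℝ → ℝ → ℝ} (hf : ContinuousOn (fun p : ℝ × ℝ => f p.1 p.2) (Icc 0 T ×ˢ univ))
    {K : ℝ≥0} (hK : ∀ t ∈ Icc 0 T, LipschitzWith K (f t)) (x₀ : ℝ) :
    ∃ x : ℝ → ℝ, IsCaputoSolution α T f x₀ x ∧
      ∀ y : ℝ → ℝ, IsCaputoSolution α T f x₀ y → ∀ t ∈ Icc 0 T, y t = x t := by
  set lam : ℝ := (K + 1) ^ α⁻¹
  have hlam : 0 < lam := by positivity
  have hweight : (K : ℝ) * (1 / lam) ^ α = ↑(K / (K + 1)) := by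
    rw [one_div, inv_rpow hlam.le, rpow_inv_rpow (by positivity) hα.ne']
    push_cast
    ring
  let Φ : C(Icc (0:ℝ) T, ℝ) → C(Icc (0:ℝ) T, ℝ) :=
    fun u => ⟨weightedPicard α lam x₀ f hT u, continuous_weightedPicard hT hα hf u⟩
  have hΦ : ContractingWith (K / (K + 1)) Φ := by
    refine ⟨(div_lt_one (by positivity)).2 (lt_add_one K), LipschitzWith.of_dist_le_mul
      fun u v => (ContinuousMap.dist_le (by positivity)).2 fun t => ?_⟩
    rw [dist_eq, ← hweight]
    exact abs_weightedPicard_sub_le hT hα hlam hf hK u v t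
  have : Nonempty C(Icc (0:ℝ) T, ℝ) := ⟨0⟩
  set u := ContractingWith.fixedPoint Φ hΦ
  refine ⟨fun t => exp (lam * t) * IccExtend hT u t, ⟨by fun_prop, ?_⟩, fun y hy t ht => ?_⟩
  · exact (weightedPicard_eq_iff hT fun t ht => by rw [IccExtend_of_mem hT u ht]).1
      (DFunLike.congr_fun (ContractingWith.fixedPoint_isFixedPt hΦ))
  · let v : C(Icc (0:ℝ) T, ℝ) := ⟨fun t => exp (-(lam * t)) * y t,
      (by fun_prop : Continuous fun t : Icc (0:ℝ) T => exp (-(lam * t))).mul hy.1.domRestrict⟩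
    have hy' : ∀ t (ht : t ∈ Icc 0 T), y t = exp (lam * t) * v ⟨t, ht⟩ := fun t _ => by
      simp [v, ← mul_assoc, ← exp_add]
    have hv : v = u :=
      hΦ.fixedPoint_unique (ContinuousMap.ext ((weightedPicard_eq_iff hT hy').2 hy.2))
    rw [hy' t ht, hv]
    exact congrArg _ (IccExtend_of_mem hT u ht).symm

theorem caputo_existence_uniqueness_general (α T : ℝ) (hα : 0 < α) (hT : 0 < T)
    (f : ℝ → ℝ → ℝ)
    (hf : ContinuousOn (fun p : ℝ × ℝ => f p.1 p.2) (Set.Icc 0 T ×ˢ Set.univ))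
    (L : ℝ → ℝ) (hLc : ContinuousOn L (Set.Icc 0 T))
    (hLip : ∀ t ∈ Set.Icc 0 T, ∀ x y : ℝ, |f t x - f t y| ≤ L t * |x - y|)
    (x₀ : ℝ) :
    ∃ x : ℝ → ℝ, IsCaputoSolution α T f x₀ x ∧
      ∀ y : ℝ → ℝ, IsCaputoSolution α T f x₀ y → ∀ t ∈ Set.Icc 0 T, y t = x t := by
  obtain ⟨t₀, -, hmax⟩ := isCompact_Icc.exists_isMaxOn ⟨0, left_mem_Icc.2 hT.le⟩ hLc
  have hK : ∀ t ∈ Icc 0 T, LipschitzWith (L t₀).toNNReal (f t) := fun t ht =>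
    LipschitzWith.of_dist_le_mul fun x y => by
      rw [dist_eq, dist_eq]
      exact (hLip t ht x y).trans (mul_le_mul_of_nonneg_right
        ((hmax ht).trans (le_coe_toNNReal _)) (abs_nonneg _))
  exact exists_isCaputoSolution_unique_of_lipschitzWith hα hT.le hf hK x₀

/-- Existence and uniqueness of the solution on `[0,T]` for continuous `f`
satisfying a Lipschitz condition in the second variable. -/
theorem caputo_existence_uniqueness (α T : ℝ) (hα : 0 < α) (hα1 : α ≤ 1) (hT : 0 < T)
    (f : ℝ → ℝ → ℝ)
    (hf : ContinuousOn (fun p : ℝ × ℝ => f p.1 p.2) (Set.Icc 0 T ×ˢ Set.univ))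
    (L : ℝ → ℝ) (hLc : ContinuousOn L (Set.Icc 0 T))
    (hLnn : ∀ t ∈ Set.Icc 0 T, 0 ≤ L t)
    (hLip : ∀ t ∈ Set.Icc 0 T, ∀ x y : ℝ, |f t x - f t y| ≤ L t * |x - y|)
    (x₀ : ℝ) :
    ∃ x : ℝ → ℝ, IsCaputoSolution α T f x₀ x ∧
      ∀ y : ℝ → ℝ, IsCaputoSolution α T f x₀ y → ∀ t ∈ Set.Icc 0 T, y t = x t :=
  caputo_existence_uniqueness_general α T hα hT f hf L hLc hLip x₀
end

section
/- Let α ∈ (0,1], T > 0, d ≥ 1, and let f : [0,T] × ℝ^d → ℝ^d be continuous and satisfy the vector-valued Lipschitz condition with continuous L : [0,T] → [0,∞). Let x₁ and x₂ be solutions on [0,T] of the Caputo fractional initial value problems with the same f and initial values x₁₀ ≠ x₂₀ in ℝ^d. Then for all t ∈ [0,T]: ‖x₁(t) − x₂(t)‖ ≤ ‖x₁₀ − x₂₀‖ · E_α(L*(t) t^α), where L*(t) := max_{τ ∈ [0,t]} L(τ). -/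
/-!
The separation `u = ‖x₁ - x₂‖` satisfies, by the Lipschitz bound with `L ≤ K := L*(t)` on
`[0, t]`, the weakly singular integral inequality `u ≤ u₀ + K · I^α u`, where `I^α` is the
Riemann–Liouville integral. Since `I^α[s ^ (α k)] = Γ(αk+1)/Γ(α(k+1)+1) · s ^ (α(k+1))` (a Beta
integral), iterating the inequality `n` times bounds `u` by the `n`-th partial sum of the series
`u₀ E_α(K s^α)` plus a remainder `M (K s^α)^n / Γ(αn+1)`. The remainder is a term of a convergent
series, hence tends to zero: the ratio of consecutive terms is `O(k^(-α))` by log-convexity of `Γ`.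
-/

open Set intervalIntegral

/-- The one-parameter Mittag-Leffler function `E_α(x) = ∑_{k=0}^∞ x^k / Γ(αk+1)`. -/
noncomputable def mittagLeffler (α x : ℝ) : ℝ :=
  ∑' k : ℕ, x ^ k / Real.Gamma (α * (k : ℝ) + 1)

/-- A continuous function `x : [0,T] → ℝ^d` solves the Caputo fractional initial value
problem `^C D^α_{0+} x(t) = f(t,x(t))`, `x(0) = x₀`, in the equivalent Volterra
integral formulation. -/
def IsCaputoSolutionVec {d : ℕ} (α T : ℝ)
    (f : ℝ → EuclideanSpace ℝ (Fin d) → EuclideanSpace ℝ (Fin d))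
    (x₀ : EuclideanSpace ℝ (Fin d)) (x : ℝ → EuclideanSpace ℝ (Fin d)) : Prop :=
  ContinuousOn x (Set.Icc 0 T) ∧
    ∀ t ∈ Set.Icc 0 T,
      x t = x₀ + (1 / Real.Gamma α) •
        ∫ s in (0:ℝ)..t, (t - s) ^ (α - 1) • f s (x s)

open MeasureTheory Filter Topology Real

namespace Real

theorem integral_rpow_mul_one_sub_rpow {a b : ℝ} (ha : 0 < a) (hb : 0 < b) :
    ∫ x in (0:ℝ)..1, x ^ (a - 1) * (1 - x) ^ (b - 1) = Gamma a * Gamma b / Gamma (a + b) := by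
  have key := Complex.Gamma_mul_Gamma_eq_betaIntegral
    (s := (a : ℂ)) (t := (b : ℂ)) (by simpa using ha) (by simpa using hb)
  have hbeta : Complex.betaIntegral a b
      = ((∫ x in (0:ℝ)..1, x ^ (a - 1) * (1 - x) ^ (b - 1) : ℝ) : ℂ) := by
    rw [Complex.betaIntegral, ← intervalIntegral.integral_ofReal]
    refine integral_congr fun x hx => ?_
    rw [uIcc_of_le zero_le_one] at hx
    push_cast
    rw [Complex.ofReal_cpow hx.1, Complex.ofReal_cpow (by linarith [hx.2])]
    push_cast
    ring
  rw [hbeta, ← Complex.ofReal_add, Complex.Gamma_ofReal, Complex.Gamma_ofReal,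
    Complex.Gamma_ofReal, ← Complex.ofReal_mul, ← Complex.ofReal_mul] at key
  rw [eq_div_iff (Gamma_pos_of_pos (add_pos ha hb)).ne', mul_comm]
  exact (Complex.ofReal_inj.mp key).symm

theorem integral_sub_rpow_mul_rpow {a b s : ℝ} (ha : 0 < a) (hb : 0 < b) (hs : 0 < s) :
    ∫ τ in (0:ℝ)..s, (s - τ) ^ (a - 1) * τ ^ (b - 1)
      = Gamma a * Gamma b / Gamma (a + b) * s ^ (a + b - 1) := by
  have hscale := smul_integral_comp_mul_right
    (a := (0:ℝ)) (b := 1) (fun τ => (s - τ) ^ (a - 1) * τ ^ (b - 1)) s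
  simp only [zero_mul, one_mul, smul_eq_mul] at hscale
  have hfactor : ∀ x ∈ uIcc (0:ℝ) 1, (s - x * s) ^ (a - 1) * (x * s) ^ (b - 1)
      = s ^ (a - 1) * s ^ (b - 1) * (x ^ (b - 1) * (1 - x) ^ (a - 1)) := by
    intro x hx
    rw [uIcc_of_le zero_le_one] at hx
    rw [show s - x * s = s * (1 - x) by ring, mul_rpow hs.le (by linarith [hx.2]),
      mul_rpow hx.1 hs.le]
    ring
  have hpow : s * (s ^ (a - 1) * s ^ (b - 1)) = s ^ (a + b - 1) := by
    rw [show a + b - 1 = 1 + (a - 1 + (b - 1)) by ring, rpow_add hs,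
      rpow_add hs, rpow_one]
  rw [← hscale, integral_congr hfactor, intervalIntegral.integral_const_mul,
    integral_rpow_mul_one_sub_rpow hb ha, add_comm b a, ← hpow]
  ring

theorem mul_Gamma_le_Gamma_add_mul_rpow {α x : ℝ} (hα0 : 0 ≤ α) (hα1 : α ≤ 1) (hx : 0 < x) :
    x * Gamma x ≤ Gamma (x + α) * (x + α) ^ (1 - α) := by
  have hxα : 0 < x + α := by linarith
  -- `x + 1` is the convex combination `α (x + α) + (1 - α) (x + α + 1)`
  have hconv := convexOn_log_Gamma.2 (mem_Ioi.2 hxα) (mem_Ioi.2 (by linarith : 0 < x + α + 1))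
    hα0 (by linarith : 0 ≤ 1 - α) (by ring)
  simp only [Function.comp_apply, smul_eq_mul] at hconv
  rw [show α * (x + α) + (1 - α) * (x + α + 1) = x + 1 by ring, Gamma_add_one hxα.ne',
    log_mul hxα.ne' (Gamma_pos_of_pos hxα).ne'] at hconv
  rw [← Gamma_add_one hx.ne', ← exp_log (Gamma_pos_of_pos (by linarith : 0 < x + 1)),
    rpow_def_of_pos hxα, ← exp_log (Gamma_pos_of_pos hxα), ← exp_add]
  exact exp_le_exp.2 (by nlinarith)

theorem Gamma_div_Gamma_add_le {α x : ℝ} (hα0 : 0 ≤ α) (hα1 : α ≤ 1) (hx : 1 ≤ x) :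
    Gamma x / Gamma (x + α) ≤ 2 * x ^ (-α) := by
  have hx0 : 0 < x := by linarith
  have hxα : 0 < x + α := by linarith
  have htwo : (2:ℝ) ^ (1 - α) ≤ 2 := by
    simpa using rpow_le_rpow_of_exponent_le (by norm_num : (1:ℝ) ≤ 2) (by linarith : 1 - α ≤ 1)
  calc Gamma x / Gamma (x + α) ≤ (x + α) ^ (1 - α) / x := by
        rw [div_le_div_iff₀ (Gamma_pos_of_pos hxα) hx0]
        linarith [mul_Gamma_le_Gamma_add_mul_rpow hα0 hα1 hx0]
    _ ≤ (2 * x) ^ (1 - α) / x := by gcongr; linarith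
    _ = 2 ^ (1 - α) * x ^ (-α) := by
        rw [mul_rpow zero_le_two hx0.le, rpow_sub hx0, rpow_one, rpow_neg hx0.le]
        field_simp
    _ ≤ 2 * x ^ (-α) := by gcongr

end Real

theorem summable_mittagLeffler {α : ℝ} (hα : 0 < α) (hα1 : α ≤ 1) (z : ℝ) :
    Summable fun k : ℕ => z ^ k / Gamma (α * k + 1) := by
  rcases eq_or_ne z 0 with rfl | hz
  · refine summable_of_ne_finset_zero (s := {0}) fun k hk => ?_
    simp [zero_pow (Finset.notMem_singleton.1 hk)]
  have hΓ : ∀ k : ℕ, 0 < Gamma (α * k + 1) := fun k => Gamma_pos_of_pos (by positivity)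
  refine summable_of_ratio_test_tendsto_lt_one zero_lt_one
    (Eventually.of_forall fun k => div_ne_zero (pow_ne_zero k hz) (hΓ k).ne') ?_
  have hratio : ∀ k : ℕ, ‖z ^ (k + 1) / Gamma (α * ↑(k + 1) + 1)‖ / ‖z ^ k / Gamma (α * k + 1)‖
      ≤ 2 * |z| * (α * k + 1) ^ (-α) := by
    intro k
    have hx : 1 ≤ α * k + 1 := le_add_of_nonneg_left (by positivity)
    have hΓk := Gamma_div_Gamma_add_le hα.le hα1 hx
    rw [show α * ↑(k + 1) + 1 = α * k + 1 + α by push_cast; ring]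
    have hΓk' := Gamma_pos_of_pos (by linarith : 0 < α * k + 1 + α)
    rw [norm_div, norm_div, norm_pow, norm_pow, Real.norm_of_nonneg hΓk'.le,
      Real.norm_of_nonneg (hΓ k).le, pow_succ, Real.norm_eq_abs]
    calc |z| ^ k * |z| / Gamma (α * k + 1 + α) / (|z| ^ k / Gamma (α * k + 1))
        = |z| * (Gamma (α * k + 1) / Gamma (α * k + 1 + α)) := by
          field_simp [pow_ne_zero k (abs_ne_zero.2 hz), (hΓ k).ne']
      _ ≤ 2 * |z| * (α * k + 1) ^ (-α) := by nlinarith [abs_nonneg z]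
  have hlim : Tendsto (fun k : ℕ => 2 * |z| * (α * k + 1) ^ (-α)) atTop (𝓝 0) := by
    have hlin : Tendsto (fun k : ℕ => α * (k : ℝ) + 1) atTop atTop :=
      tendsto_atTop_add_const_right _ 1 (tendsto_natCast_atTop_atTop.const_mul_atTop hα)
    simpa using ((tendsto_rpow_neg_atTop hα).comp hlin).const_mul (2 * |z|)
  exact squeeze_zero (fun k => by positivity) hratio hlim

/-- The Riemann–Liouville fractional integral `I^α` of order `α` with base point `0`. -/
noncomputable def fracIntegral {E : Type*} [NormedAddCommGroup E] [NormedSpace ℝ E]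
    (α : ℝ) (g : ℝ → E) (t : ℝ) : E :=
  (1 / Gamma α) • ∫ s in (0:ℝ)..t, (t - s) ^ (α - 1) • g s

section fracIntegral

variable {E : Type*} [NormedAddCommGroup E] [NormedSpace ℝ E] {α t : ℝ}

theorem intervalIntegrable_sub_rpow_smul (hα : 0 < α) (ht : 0 ≤ t) {g : ℝ → E}
    (hg : ContinuousOn g (Icc 0 t)) :
    IntervalIntegrable (fun s => (t - s) ^ (α - 1) • g s) volume 0 t := by
  have hkernel := ((intervalIntegrable_rpow' (a := 0) (b := t)
    (by linarith : (-1:ℝ) < α - 1)).comp_sub_left t).symm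
  simp only [sub_zero, sub_self] at hkernel
  exact hkernel.smul_continuousOn (by rwa [uIcc_of_le ht])

theorem fracIntegral_const_mul (g : ℝ → ℝ) (c : ℝ) :
    fracIntegral α (fun s => c * g s) t = c * fracIntegral α g t := by
  simp only [fracIntegral, smul_eq_mul, mul_left_comm _ c, intervalIntegral.integral_const_mul]

theorem fracIntegral_add (hα : 0 < α) (ht : 0 ≤ t) {g h : ℝ → E}
    (hg : ContinuousOn g (Icc 0 t)) (hh : ContinuousOn h (Icc 0 t)) :
    fracIntegral α (fun s => g s + h s) t = fracIntegral α g t + fracIntegral α h t := by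
  simp only [fracIntegral, ← smul_add,
    ← integral_add (intervalIntegrable_sub_rpow_smul hα ht hg)
      (intervalIntegrable_sub_rpow_smul hα ht hh)]

theorem fracIntegral_sub (hα : 0 < α) (ht : 0 ≤ t) {g h : ℝ → E}
    (hg : ContinuousOn g (Icc 0 t)) (hh : ContinuousOn h (Icc 0 t)) :
    fracIntegral α (fun s => g s - h s) t = fracIntegral α g t - fracIntegral α h t := by
  simp only [fracIntegral, ← smul_sub,
    ← integral_sub (intervalIntegrable_sub_rpow_smul hα ht hg)
      (intervalIntegrable_sub_rpow_smul hα ht hh)]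

theorem fracIntegral_finsetSum (hα : 0 < α) (ht : 0 ≤ t) {ι : Type*} (S : Finset ι)
    {g : ι → ℝ → E} (hg : ∀ i ∈ S, ContinuousOn (g i) (Icc 0 t)) :
    fracIntegral α (fun s => ∑ i ∈ S, g i s) t = ∑ i ∈ S, fracIntegral α (g i) t := by
  simp only [fracIntegral, Finset.smul_sum]
  rw [integral_finsetSum fun i hi => intervalIntegrable_sub_rpow_smul hα ht (hg i hi),
    Finset.smul_sum]

theorem norm_fracIntegral_le (hα : 0 < α) (ht : 0 ≤ t) (g : ℝ → E) :
    ‖fracIntegral α g t‖ ≤ fracIntegral α (fun s => ‖g s‖) t := by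
  have hΓ := Gamma_pos_of_pos hα
  rw [fracIntegral, fracIntegral, norm_smul, Real.norm_of_nonneg (by positivity), smul_eq_mul]
  gcongr
  refine (intervalIntegral.norm_integral_le_integral_norm ht).trans_eq
    (integral_congr fun s hs => ?_)
  rw [uIcc_of_le ht] at hs
  rw [norm_smul, Real.norm_of_nonneg (rpow_nonneg (by linarith [hs.2]) _), smul_eq_mul]

theorem fracIntegral_mono (hα : 0 < α) (ht : 0 ≤ t) {g h : ℝ → ℝ}
    (hg : ContinuousOn g (Icc 0 t)) (hh : ContinuousOn h (Icc 0 t))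
    (hgh : ∀ s ∈ Icc 0 t, g s ≤ h s) :
    fracIntegral α g t ≤ fracIntegral α h t := by
  have hΓ := Gamma_pos_of_pos hα
  simp only [fracIntegral, smul_eq_mul] at *
  gcongr
  refine integral_mono_on ht ?_ ?_ fun s hs => ?_
  · simpa using intervalIntegrable_sub_rpow_smul hα ht hg
  · simpa using intervalIntegrable_sub_rpow_smul hα ht hh
  · exact mul_le_mul_of_nonneg_left (hgh s hs) (rpow_nonneg (by linarith [hs.2]) _)

theorem fracIntegral_rpow (hα : 0 < α) (ht : 0 ≤ t) {β : ℝ} (hβ : 0 ≤ β) :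
    fracIntegral α (fun s => s ^ β) t = Gamma (β + 1) / Gamma (β + α + 1) * t ^ (β + α) := by
  rcases ht.eq_or_lt with rfl | ht
  · simp [fracIntegral, zero_rpow (by positivity : β + α ≠ 0)]
  have hconv := integral_sub_rpow_mul_rpow hα (by positivity : 0 < β + 1) ht
  simp only [add_sub_cancel_right] at hconv
  rw [fracIntegral, smul_eq_mul]
  simp only [smul_eq_mul]
  rw [hconv, show α + (β + 1) = β + α + 1 by ring, show β + α + 1 - 1 = β + α by ring]
  field_simp [(Gamma_pos_of_pos hα).ne']

end fracIntegral

/-- The `k`-th term of the series `E_α(K t^α)`. -/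
noncomputable def mittagLefflerTerm (α K : ℝ) (k : ℕ) (t : ℝ) : ℝ :=
  K ^ k / Gamma (α * k + 1) * t ^ (α * k)

section mittagLefflerTerm

variable {α K t : ℝ}

theorem mittagLefflerTerm_zero : mittagLefflerTerm α K 0 t = 1 := by
  simp [mittagLefflerTerm]

theorem continuous_mittagLefflerTerm (hα : 0 ≤ α) (k : ℕ) :
    Continuous (mittagLefflerTerm α K k) :=
  continuous_const.mul (continuous_rpow_const (by positivity))

theorem hasSum_mittagLefflerTerm (hα : 0 < α) (hα1 : α ≤ 1) (ht : 0 ≤ t) :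
    HasSum (fun k => mittagLefflerTerm α K k t) (mittagLeffler α (K * t ^ α)) := by
  have hterm : (fun k => mittagLefflerTerm α K k t)
      = fun k : ℕ => (K * t ^ α) ^ k / Gamma (α * k + 1) := by
    ext k
    rw [mittagLefflerTerm, mul_pow, ← rpow_natCast (t ^ α), ← rpow_mul ht]
    ring
  rw [hterm]
  exact (summable_mittagLeffler hα hα1 _).hasSum

theorem mul_fracIntegral_mittagLefflerTerm (hα : 0 < α) (ht : 0 ≤ t) (k : ℕ) :
    K * fracIntegral α (mittagLefflerTerm α K k) t = mittagLefflerTerm α K (k + 1) t := by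
  rw [show mittagLefflerTerm α K k = fun s => K ^ k / Gamma (α * k + 1) * s ^ (α * k) from rfl,
    fracIntegral_const_mul, mittagLefflerTerm, fracIntegral_rpow hα ht (by positivity)]
  have hΓ := Gamma_pos_of_pos (by positivity : 0 < α * (k + 1 : ℕ) + 1)
  rw [show α * k + α = α * (k + 1 : ℕ) by push_cast; ring]
  field_simp
  ring

end mittagLefflerTerm

section Gronwall

variable {α K u₀ M t : ℝ} {u : ℝ → ℝ}

theorem le_sum_mittagLefflerTerm_add (hα : 0 < α) (hK : 0 ≤ K) (hu : ContinuousOn u (Icc 0 t))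
    (hM : ∀ s ∈ Icc 0 t, u s ≤ M) (h : ∀ s ∈ Icc 0 t, u s ≤ u₀ + K * fracIntegral α u s)
    (n : ℕ) : ∀ s ∈ Icc 0 t, u s ≤
      u₀ * ∑ k ∈ Finset.range n, mittagLefflerTerm α K k s + M * mittagLefflerTerm α K n s := by
  have hcont := continuous_mittagLefflerTerm (K := K) hα.le
  induction n with
  | zero => simpa [mittagLefflerTerm_zero] using hM
  | succ n ih =>
    intro s hs
    have hsub : Icc 0 s ⊆ Icc 0 t := Icc_subset_Icc_right hs.2
    have hsum : ContinuousOn (fun τ => u₀ * ∑ k ∈ Finset.range n, mittagLefflerTerm α K k τ)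
        (Icc 0 s) := (continuous_finsetSum _ fun k _ => hcont k).continuousOn.const_mul u₀
    have hlast : ContinuousOn (fun τ => M * mittagLefflerTerm α K n τ) (Icc 0 s) :=
      (hcont n).continuousOn.const_mul M
    calc u s ≤ u₀ + K * fracIntegral α u s := h s hs
      _ ≤ u₀ + K * fracIntegral α (fun τ => u₀ * ∑ k ∈ Finset.range n, mittagLefflerTerm α K k τ
            + M * mittagLefflerTerm α K n τ) s := by
          gcongr
          exact fracIntegral_mono hα hs.1 (hu.mono hsub) (hsum.add hlast) fun τ hτ => ih τ (hsub hτ)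
      _ = u₀ * ∑ k ∈ Finset.range (n + 1), mittagLefflerTerm α K k s
            + M * mittagLefflerTerm α K (n + 1) s := by
          rw [fracIntegral_add hα hs.1 hsum hlast, fracIntegral_const_mul, fracIntegral_const_mul,
            fracIntegral_finsetSum hα hs.1 _ fun k _ => (hcont k).continuousOn,
            Finset.sum_range_succ', mittagLefflerTerm_zero]
          simp only [← mul_fracIntegral_mittagLefflerTerm hα hs.1, ← Finset.mul_sum]
          ring

/-- Gronwall's inequality for the Riemann–Liouville integral. -/
theorem le_mul_mittagLeffler_of_le_add_fracIntegral (hα : 0 < α) (hα1 : α ≤ 1) (hK : 0 ≤ K)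
    (ht : 0 ≤ t) (hu : ContinuousOn u (Icc 0 t))
    (h : ∀ s ∈ Icc 0 t, u s ≤ u₀ + K * fracIntegral α u s) :
    u t ≤ u₀ * mittagLeffler α (K * t ^ α) := by
  obtain ⟨M, hM⟩ := isCompact_Icc.bddAbove_image hu
  have hbound := fun n => le_sum_mittagLefflerTerm_add hα hK hu
    (fun s hs => hM (mem_image_of_mem u hs)) h n t ⟨ht, le_rfl⟩
  have hsum := hasSum_mittagLefflerTerm (K := K) hα hα1 ht
  have hlim := (hsum.tendsto_sum_nat.const_mul u₀).add
    (hsum.summable.tendsto_atTop_zero.const_mul M)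
  simpa using ge_of_tendsto' hlim hbound

end Gronwall

theorem norm_sub_le_add_mul_fracIntegral {E : Type*} [NormedAddCommGroup E] [NormedSpace ℝ E]
    {α K t : ℝ} (hα : 0 < α) (ht : 0 ≤ t) {x₁ x₂ g₁ g₂ : ℝ → E} {y₁ y₂ : E}
    (hg₁ : ContinuousOn g₁ (Icc 0 t)) (hg₂ : ContinuousOn g₂ (Icc 0 t))
    (hx : ContinuousOn (fun s => ‖x₁ s - x₂ s‖) (Icc 0 t))
    (hx₁ : x₁ t = y₁ + fracIntegral α g₁ t) (hx₂ : x₂ t = y₂ + fracIntegral α g₂ t)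
    (hg : ∀ s ∈ Icc 0 t, ‖g₁ s - g₂ s‖ ≤ K * ‖x₁ s - x₂ s‖) :
    ‖x₁ t - x₂ t‖ ≤ ‖y₁ - y₂‖ + K * fracIntegral α (fun s => ‖x₁ s - x₂ s‖) t := by
  calc ‖x₁ t - x₂ t‖ = ‖(y₁ - y₂) + fracIntegral α (fun s => g₁ s - g₂ s) t‖ := by
        rw [hx₁, hx₂, fracIntegral_sub hα ht hg₁ hg₂]
        abel_nf
    _ ≤ ‖y₁ - y₂‖ + fracIntegral α (fun s => ‖g₁ s - g₂ s‖) t :=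
        (norm_add_le _ _).trans (by gcongr; exact norm_fracIntegral_le hα ht _)
    _ ≤ ‖y₁ - y₂‖ + fracIntegral α (fun s => K * ‖x₁ s - x₂ s‖) t := by
        gcongr
        exact fracIntegral_mono hα ht (hg₁.sub hg₂).norm (continuousOn_const.mul hx) hg
    _ = ‖y₁ - y₂‖ + K * fracIntegral α (fun s => ‖x₁ s - x₂ s‖) t := by
        rw [fracIntegral_const_mul]

theorem caputo_separation_upper_bound_vec_general (α T : ℝ) (hα : 0 < α) (hα1 : α ≤ 1)
    (d : ℕ)
    (f : ℝ → EuclideanSpace ℝ (Fin d) → EuclideanSpace ℝ (Fin d))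
    (hf : ContinuousOn (fun p : ℝ × EuclideanSpace ℝ (Fin d) => f p.1 p.2)
      (Set.Icc 0 T ×ˢ Set.univ))
    (L : ℝ → ℝ) (hLc : ContinuousOn L (Set.Icc 0 T))
    (hLnn : ∀ t ∈ Set.Icc 0 T, 0 ≤ L t)
    (hLip : ∀ t ∈ Set.Icc 0 T, ∀ x y : EuclideanSpace ℝ (Fin d),
      ‖f t x - f t y‖ ≤ L t * ‖x - y‖)
    (x₁₀ x₂₀ : EuclideanSpace ℝ (Fin d))
    (x₁ x₂ : ℝ → EuclideanSpace ℝ (Fin d))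
    (hx₁ : IsCaputoSolutionVec α T f x₁₀ x₁) (hx₂ : IsCaputoSolutionVec α T f x₂₀ x₂) :
    ∀ t ∈ Set.Icc 0 T,
      ‖x₁ t - x₂ t‖
        ≤ ‖x₁₀ - x₂₀‖ * mittagLeffler α (sSup (L '' Set.Icc 0 t) * t ^ α) := by
  intro t ⟨ht0, htT⟩
  obtain ⟨hc₁, hv₁⟩ := hx₁
  obtain ⟨hc₂, hv₂⟩ := hx₂
  have hsub : ∀ {s}, s ≤ t → Icc 0 s ⊆ Icc 0 T := fun hs => Icc_subset_Icc_right (hs.trans htT)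
  have hfx : ∀ {x : ℝ → EuclideanSpace ℝ (Fin d)}, ContinuousOn x (Icc 0 T) →
      ContinuousOn (fun s => f s (x s)) (Icc 0 T) := fun hx =>
    hf.comp (continuousOn_id.prodMk hx) fun s hs => ⟨hs, mem_univ _⟩
  have hL : ∀ s ∈ Icc 0 t, L s ≤ sSup (L '' Icc 0 t) := fun s hs =>
    le_csSup (isCompact_Icc.bddAbove_image (hLc.mono (hsub le_rfl))) (mem_image_of_mem L hs)
  have hK : 0 ≤ sSup (L '' Icc 0 t) := (hLnn 0 ⟨le_rfl, ht0.trans htT⟩).trans (hL 0 ⟨le_rfl, ht0⟩)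
  refine le_mul_mittagLeffler_of_le_add_fracIntegral hα hα1 hK ht0
    ((hc₁.sub hc₂).norm.mono (hsub le_rfl)) fun s hs => ?_
  exact norm_sub_le_add_mul_fracIntegral hα hs.1 ((hfx hc₁).mono (hsub hs.2))
    ((hfx hc₂).mono (hsub hs.2)) ((hc₁.sub hc₂).norm.mono (hsub hs.2))
    (hv₁ s (hsub hs.2 ⟨hs.1, le_rfl⟩)) (hv₂ s (hsub hs.2 ⟨hs.1, le_rfl⟩))
    fun τ hτ => (hLip τ (hsub hs.2 hτ) _ _).trans
      (mul_le_mul_of_nonneg_right (hL τ ⟨hτ.1, hτ.2.trans hs.2⟩) (norm_nonneg _))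

/-- Vector-valued upper bound for the separation of solutions:
`‖x₁(t) − x₂(t)‖ ≤ ‖x₁₀ − x₂₀‖ · E_α(L*(t)·t^α)` with `L*(t) = max_{τ∈[0,t]} L(τ)`. -/
theorem caputo_separation_upper_bound_vec (α T : ℝ) (hα : 0 < α) (hα1 : α ≤ 1)
    (hT : 0 < T) (d : ℕ) (hd : 1 ≤ d)
    (f : ℝ → EuclideanSpace ℝ (Fin d) → EuclideanSpace ℝ (Fin d))
    (hf : ContinuousOn (fun p : ℝ × EuclideanSpace ℝ (Fin d) => f p.1 p.2)
      (Set.Icc 0 T ×ˢ Set.univ))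
    (L : ℝ → ℝ) (hLc : ContinuousOn L (Set.Icc 0 T))
    (hLnn : ∀ t ∈ Set.Icc 0 T, 0 ≤ L t)
    (hLip : ∀ t ∈ Set.Icc 0 T, ∀ x y : EuclideanSpace ℝ (Fin d),
      ‖f t x - f t y‖ ≤ L t * ‖x - y‖)
    (x₁₀ x₂₀ : EuclideanSpace ℝ (Fin d)) (hne : x₁₀ ≠ x₂₀)
    (x₁ x₂ : ℝ → EuclideanSpace ℝ (Fin d))
    (hx₁ : IsCaputoSolutionVec α T f x₁₀ x₁) (hx₂ : IsCaputoSolutionVec α T f x₂₀ x₂) :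
    ∀ t ∈ Set.Icc 0 T,
      ‖x₁ t - x₂ t‖
        ≤ ‖x₁₀ - x₂₀‖ * mittagLeffler α (sSup (L '' Set.Icc 0 t) * t ^ α) :=
  caputo_separation_upper_bound_vec_general α T hα hα1 d f hf L hLc hLnn hLip x₁₀ x₂₀ x₁ x₂ hx₁ hx₂
end
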